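/- Let Γ₁ and Γ₂ be groups, (G,γ) a (Γ₁⊕Γ₂)-labeled simple graph, and C, C₁, C₂ pairwise vertex-disjoint cycles of G. Let P₁, P₁', P₂, P₂' be pairwise vertex-disjoint paths such that for each i ∈ {1,2}, Pᵢ and Pᵢ' are C–Cᵢ-paths (one end on C, the other on Cᵢ, internally disjoint from C ∪ C₁ ∪ C₂) with V(Pᵢ) ∩ V(C₃₋ᵢ) = ∅ and V(Pᵢ') ∩ V(C₃₋ᵢ) = ∅. Let p₁, p₁', p₂, p₂' be the ends of P₁, P₁', P₂, P₂' on C, and assume these four vertices occur in this cyclic order on C. Assume C₁ is Γ₁-non-zero and Γ₂-zero, and C₂ is Γ₂-non-zero. Let I₁ be the subpath of C with ends p₁ and p₂' that does not contain p₂, and let I₂ be the subpath of C with ends p₁' and p₂ that does not contain p₁. Then there is a (Γ₁,Γ₂)-non-zero cycle D contained in C ∪ C₁ ∪ C₂ ∪ P₁ ∪ P₁' ∪ P₂ ∪ P₂' that contains I₁ ∪ I₂. -/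

import Mathlib

/-!
The cycle `D` runs along `Q₄`, out along `P₁`, around an arc of `C₁`, back along `P₁'`, along
`Q₂`, out along `P₂`, around an arc of `C₂` and back along `P₂'`; it is a cycle because the pieces
meet only where they are glued. Each of `C₁`, `C₂` offers two arcs between the attachment
points, and the values of the two arcs differ by a conjugate of the value of the cycle. As `C₂` is
`Γ₂`-non-zero, one of its arcs makes `D` `Γ₂`-non-zero. As `C₁` is `Γ₂`-zero, the choice of its arc
does not affect the `Γ₂`-value, and as `C₁` is `Γ₁`-non-zero, one choice makes `D` `Γ₁`-non-zero.
-/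

open SimpleGraph

/-- The group-value of a walk in a group-labeled graph. -/
def walkVal {V Γ : Type} [Group Γ] {G : SimpleGraph V} (γ : V → V → Γ)
    {u v : V} (w : G.Walk u v) : Γ :=
  (w.darts.map fun d => γ d.toProd.1 d.toProd.2).prod

/-- `γ` is a labeling of the simple graph `G`. -/
def IsLab {V Γ : Type} [Group Γ] (G : SimpleGraph V) (γ : V → V → Γ) : Prop :=
  ∀ u v : V, G.Adj u v → γ v u = (γ u v)⁻¹

/-- A walk is `(Γ₁,Γ₂)`-non-zero if its value is non-identity in both coordinates. -/
def DNZ {V Γ₁ Γ₂ : Type} [Group Γ₁] [Group Γ₂] {G : SimpleGraph V}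
    (γ : V → V → Γ₁ × Γ₂) {u v : V} (w : G.Walk u v) : Prop :=
  walkVal (fun a b => (γ a b).1) w ≠ 1 ∧ walkVal (fun a b => (γ a b).2) w ≠ 1

namespace SimpleGraph.Walk

variable {V : Type} {G : SimpleGraph V} {u v w x z : V}

theorem IsPath.start_notMem_support_tail {p : G.Walk u v} (hp : p.IsPath) :
    u ∉ p.support.tail :=
  (List.nodup_cons.1 (p.cons_tail_support ▸ hp.support_nodup)).1

theorem IsPath.append_of_inter {p : G.Walk u v} {q : G.Walk v w} (hp : p.IsPath)
    (hq : q.IsPath) (h : ∀ z ∈ p.support, z ∈ q.support → z = v) : (p.append q).IsPath := by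
  refine IsPath.mk' ?_
  rw [support_append, List.nodup_append']
  refine ⟨hp.support_nodup, hq.support_nodup.tail, List.disjoint_left.2 fun z hz hz' => ?_⟩
  obtain rfl := h z hz (List.mem_of_mem_tail hz')
  exact hq.start_notMem_support_tail hz'

theorem IsPath.isCycle_append_of_inter {p : G.Walk u v} {q : G.Walk v u} (hp : p.IsPath)
    (hq : q.IsPath) (h : ∀ z ∈ p.support, z ∈ q.support → z = u ∨ z = v)
    (hlen : 1 < p.length) : (p.append q).IsCycle := by
  refine hp.isCycle_append hq (List.disjoint_left.2 fun z hz hz' => ?_) (Or.inl hlen)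
  rcases h z (List.mem_of_mem_tail hz) (List.mem_of_mem_tail hz') with rfl | rfl
  · exact hp.start_notMem_support_tail hz
  · exact hq.start_notMem_support_tail hz'

theorem IsCycle.isPath_isPath_disjoint_of_append₄ {a b c d : V} {Q₁ : G.Walk a b}
    {Q₂ : G.Walk b c} {Q₃ : G.Walk c d} {Q₄ : G.Walk d a}
    (hC : (Q₁.append (Q₂.append (Q₃.append Q₄))).IsCycle)
    (h₁ : ¬Q₁.Nil) (h₃ : ¬Q₃.Nil) :
    Q₂.IsPath ∧ Q₄.IsPath ∧ ∀ z ∈ Q₄.support, z ∉ Q₂.support := by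
  have hpath := hC.isPath_of_append_right h₁
  refine ⟨hpath.of_append_left, hpath.of_append_right.of_append_right, fun z hz₄ hz₂ => ?_⟩
  have h₃₄ : ¬(Q₃.append Q₄).Nil := fun h => h₃ (nil_append_iff.1 h).1
  have hz : z ∈ (Q₃.append Q₄).tail.support := by
    rw [support_tail_of_not_nil _ h₃₄, tail_support_append]
    rw [← Q₄.cons_tail_support, List.mem_cons] at hz₄
    rcases hz₄ with rfl | hz₄
    exacts [List.mem_append_left _ (end_mem_tail_support h₃), List.mem_append_right _ hz₄]
  exact List.disjoint_left.1 (hpath.disjoint_support_of_append h₃₄) hz₂ hz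

def IsPathBetween (A B : Set V) (P : G.Walk u v) : Prop :=
  P.IsPath ∧ u ∈ A ∧ v ∈ B ∧ ∀ z ∈ P.support, z ≠ u → z ≠ v → z ∉ A ∧ z ∉ B

namespace IsPathBetween

variable {A B : Set V} {P : G.Walk u v}

theorem eq_start_of_mem (hP : P.IsPathBetween A B) (hAB : Disjoint A B) (hz : z ∈ P.support)
    (hzA : z ∈ A) : z = u := by
  by_contra hzu
  by_cases hzv : z = v
  · exact Set.disjoint_left.1 hAB hzA (hzv ▸ hP.2.2.1)
  · exact (hP.2.2.2 z hz hzu hzv).1 hzA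

theorem eq_end_of_mem (hP : P.IsPathBetween A B) (hAB : Disjoint A B) (hz : z ∈ P.support)
    (hzB : z ∈ B) : z = v := by
  by_contra hzv
  by_cases hzu : z = u
  · exact Set.disjoint_left.1 hAB (hzu ▸ hP.2.1) hzB
  · exact (hP.2.2.2 z hz hzu hzv).2 hzB

theorem one_le_length (hP : P.IsPathBetween A B) (hAB : Disjoint A B) : 1 ≤ P.length := by
  by_contra! h
  have huv : u = v := eq_of_length_eq_zero (p := P) (by omega)
  exact Set.disjoint_left.1 hAB hP.2.1 (huv ▸ hP.2.2.1)

variable {R : G.Walk v w} {P' : G.Walk x w}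

theorem isPath_append_append_reverse (hP : P.IsPathBetween A B) (hP' : P'.IsPathBetween A B)
    (hAB : Disjoint A B) (hPP' : ∀ z ∈ P.support, z ∉ P'.support) (hR : R.IsPath)
    (hRB : ∀ z ∈ R.support, z ∈ B) : (P.append (R.append P'.reverse)).IsPath := by
  refine hP.1.append_of_inter (hR.append_of_inter hP'.1.reverse fun z hzR hzP' => ?_)
    fun z hzP hz => ?_
  · exact hP'.eq_end_of_mem hAB (by simpa using hzP') (hRB z hzR)
  · rw [mem_support_append_iff, support_reverse, List.mem_reverse] at hz
    rcases hz with hz | hz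
    · exact hP.eq_end_of_mem hAB hzP (hRB z hz)
    · exact absurd hz (hPP' z hzP)

theorem eq_or_eq_of_mem_append_append_reverse (hP : P.IsPathBetween A B)
    (hP' : P'.IsPathBetween A B) (hAB : Disjoint A B) (hRB : ∀ z ∈ R.support, z ∈ B)
    (hz : z ∈ (P.append (R.append P'.reverse)).support) (hzA : z ∈ A) : z = u ∨ z = x := by
  simp only [mem_support_append_iff, support_reverse, List.mem_reverse] at hz
  rcases hz with hz | hz | hz
  · exact Or.inl (hP.eq_start_of_mem hAB hz hzA)
  · exact absurd (hRB z hz) (Set.disjoint_left.1 hAB hzA)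
  · exact Or.inr (hP'.eq_start_of_mem hAB hz hzA)

theorem one_lt_length_append_append_reverse (hP : P.IsPathBetween A B)
    (hP' : P'.IsPathBetween A B) (hAB : Disjoint A B) :
    1 < (P.append (R.append P'.reverse)).length := by
  have := hP.one_le_length hAB
  have := hP'.one_le_length hAB
  simp only [length_append, length_reverse]
  omega

end IsPathBetween

theorem isCycle_append_append {A : Set V} {p₁ p₁' p₂ p₂' : V} {Q₄ : G.Walk p₂' p₁}
    {X₁ : G.Walk p₁ p₁'} {Q₂ : G.Walk p₁' p₂} {X₂ : G.Walk p₂ p₂'} (hQ₄ : Q₄.IsPath)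
    (hQ₂ : Q₂.IsPath) (hQ : ∀ z ∈ Q₄.support, z ∉ Q₂.support) (hQ₄A : ∀ z ∈ Q₄.support, z ∈ A)
    (hQ₂A : ∀ z ∈ Q₂.support, z ∈ A) (hX₁ : X₁.IsPath) (hX₂ : X₂.IsPath)
    (hX : ∀ z ∈ X₁.support, z ∉ X₂.support)
    (hX₁A : ∀ z ∈ X₁.support, z ∈ A → z = p₁ ∨ z = p₁')
    (hX₂A : ∀ z ∈ X₂.support, z ∈ A → z = p₂ ∨ z = p₂') (hlen : 1 < X₁.length) :
    ((Q₄.append X₁).append (Q₂.append X₂)).IsCycle := by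
  have hp₁' : p₁' ∉ Q₄.support := fun h => hQ _ h Q₂.start_mem_support
  have hp₂ : p₂ ∉ Q₄.support := fun h => hQ _ h Q₂.end_mem_support
  have hp₁ : p₁ ∉ Q₂.support := hQ _ Q₄.end_mem_support
  have hp₂' : p₂' ∉ Q₂.support := hQ _ Q₄.start_mem_support
  have hY₁ : (Q₄.append X₁).IsPath := hQ₄.append_of_inter hX₁ fun z hz₄ hz =>
    (hX₁A z hz (hQ₄A z hz₄)).resolve_right (by rintro rfl; exact hp₁' hz₄)
  have hY₂ : (Q₂.append X₂).IsPath := hQ₂.append_of_inter hX₂ fun z hz₂ hz =>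
    (hX₂A z hz (hQ₂A z hz₂)).resolve_right (by rintro rfl; exact hp₂' hz₂)
  refine hY₁.isCycle_append_of_inter hY₂ (fun z hz hz' => ?_) (by simp only [length_append]; omega)
  rw [mem_support_append_iff] at hz hz'
  rcases hz with hz₄ | hz₁ <;> rcases hz' with hz₂ | hz₂
  · exact absurd hz₂ (hQ z hz₄)
  · exact Or.inl ((hX₂A z hz₂ (hQ₄A z hz₄)).resolve_left (by rintro rfl; exact hp₂ hz₄))
  · exact Or.inr ((hX₁A z hz₁ (hQ₂A z hz₂)).resolve_left (by rintro rfl; exact hp₁ hz₂))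
  · exact absurd hz₂ (hX z hz₁)

def IsPathAlong (R : G.Walk u w) (c : G.Walk v v) : Prop :=
  R.IsPath ∧ R.support ⊆ c.support ∧ R.edges ⊆ c.edges

section Arcs

variable [DecidableEq V] (c : G.Walk v v) (hu : u ∈ c.support) (hw : w ∈ c.support)

def arc : G.Walk u w :=
  (c.rotate u hu).takeUntil w ((c.mem_support_rotate_iff u hu).2 hw)

def coarc : G.Walk u w :=
  ((c.rotate u hu).dropUntil w ((c.mem_support_rotate_iff u hu).2 hw)).reverse

variable {c}

theorem IsCycle.isPathAlong_arc (hc : c.IsCycle) : (c.arc hu hw).IsPathAlong c := by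
  refine ⟨(hc.rotate hu).isPath_takeUntil _, fun z hz => ?_, fun e he => ?_⟩
  · exact (c.mem_support_rotate_iff u hu).1 (support_takeUntil_subset_support _ _ hz)
  · exact (c.rotate_edges u hu).mem_iff.1 (edges_takeUntil_subset_edges _ _ he)

theorem IsCycle.isPathAlong_coarc (hc : c.IsCycle) (huw : u ≠ w) :
    (c.coarc hu hw).IsPathAlong c := by
  have hc' := hc.rotate hu
  rw [← (c.rotate u hu).take_spec ((c.mem_support_rotate_iff u hu).2 hw)] at hc'
  refine ⟨(hc'.isPath_of_append_right (not_nil_of_ne huw)).reverse, fun z hz => ?_, fun e he => ?_⟩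
  · rw [coarc, support_reverse, List.mem_reverse] at hz
    exact (c.mem_support_rotate_iff u hu).1 (support_dropUntil_subset_support _ _ hz)
  · rw [coarc, edges_reverse, List.mem_reverse] at he
    exact (c.rotate_edges u hu).mem_iff.1 (edges_dropUntil_subset_edges _ _ he)

end Arcs

end SimpleGraph.Walk

section WalkValue

open SimpleGraph Walk

variable {V Γ Γ' : Type} [Group Γ] [Group Γ'] {G : SimpleGraph V} (γ : V → V → Γ) {u v w : V}

theorem walkVal_append (p : G.Walk u v) (q : G.Walk v w) :
    walkVal γ (p.append q) = walkVal γ p * walkVal γ q := by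
  simp [walkVal, darts_append]

theorem walkVal_reverse {γ : V → V → Γ} (hγ : IsLab G γ) (p : G.Walk u v) :
    walkVal γ p.reverse = (walkVal γ p)⁻¹ := by
  induction p with
  | nil => simp [walkVal]
  | cons h p ih =>
    rw [reverse_cons, walkVal_append, ih]
    simp [walkVal, hγ _ _ h]

theorem walkVal_map (f : Γ →* Γ') (p : G.Walk u v) :
    walkVal (fun a b => f (γ a b)) p = f (walkVal γ p) := by
  simp [walkVal, map_list_prod, Function.comp_def]

theorem IsLab.map {γ : V → V → Γ} (hγ : IsLab G γ) (f : Γ →* Γ') :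
    IsLab G fun a b => f (γ a b) := fun a b h => by simp only [hγ a b h, map_inv]

theorem walkVal_rotate_eq_one_iff [DecidableEq V] {c : G.Walk v v} (hu : u ∈ c.support) :
    walkVal γ (c.rotate u hu) = 1 ↔ walkVal γ c = 1 := by
  conv_rhs => rw [← c.take_spec hu]
  rw [rotate, walkVal_append, walkVal_append, mul_eq_one_comm]

theorem walkVal_coarc_eq_walkVal_arc_iff [DecidableEq V] {γ : V → V → Γ} (hγ : IsLab G γ)
    {c : G.Walk v v} (hu : u ∈ c.support) (hw : w ∈ c.support) :
    walkVal γ (c.coarc hu hw) = walkVal γ (c.arc hu hw) ↔ walkVal γ c = 1 := by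
  rw [coarc, walkVal_reverse hγ, eq_comm, arc, eq_inv_iff_mul_eq_one, ← walkVal_append,
    take_spec, walkVal_rotate_eq_one_iff]

theorem map_walkVal_coarc_eq_iff [DecidableEq V] {γ : V → V → Γ} (hγ : IsLab G γ)
    {c : G.Walk v v} (hu : u ∈ c.support) (hw : w ∈ c.support) (f : Γ →* Γ') :
    f (walkVal γ (c.coarc hu hw)) = f (walkVal γ (c.arc hu hw)) ↔ f (walkVal γ c) = 1 := by
  simpa only [walkVal_map] using walkVal_coarc_eq_walkVal_arc_iff (hγ.map f) hu hw

section Prod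

variable {Γ₁ Γ₂ : Type} [Group Γ₁] [Group Γ₂] (γ : V → V → Γ₁ × Γ₂) (p : G.Walk u v)

theorem walkVal_fst : walkVal (fun a b => (γ a b).1) p = (walkVal γ p).1 :=
  walkVal_map γ (MonoidHom.fst Γ₁ Γ₂) p

theorem walkVal_snd : walkVal (fun a b => (γ a b).2) p = (walkVal γ p).2 :=
  walkVal_map γ (MonoidHom.snd Γ₁ Γ₂) p

theorem dnz_iff : DNZ γ p ↔ (walkVal γ p).1 ≠ 1 ∧ (walkVal γ p).2 ≠ 1 := by
  rw [DNZ, walkVal_fst, walkVal_snd]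

end Prod

end WalkValue

theorem exists_fst_ne_one_and_snd_ne_one {Γ₁ Γ₂ α β : Type*} [Group Γ₁] [Group Γ₂]
    (f : α → Γ₁ × Γ₂) (g : β → Γ₁ × Γ₂) (a b d : Γ₁ × Γ₂) {S : Set α} {T : Set β}
    {x x' : α} {y y' : β} (hx : x ∈ S) (hx' : x' ∈ S) (hy : y ∈ T) (hy' : y' ∈ T)
    (hxx'₁ : (f x).1 ≠ (f x').1) (hxx'₂ : (f x).2 = (f x').2) (hyy' : (g y).2 ≠ (g y').2) :
    ∃ s ∈ S, ∃ t ∈ T, (a * f s * b * g t * d).1 ≠ 1 ∧ (a * f s * b * g t * d).2 ≠ 1 := by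
  obtain ⟨t, ht, ht₂⟩ : ∃ t ∈ T, (a * f x * b * g t * d).2 ≠ 1 := by
    have : (a * f x * b * g y * d).2 ≠ (a * f x * b * g y' * d).2 := by simpa using hyy'
    rcases this.ne_or_ne 1 with h | h
    exacts [⟨y, hy, h⟩, ⟨y', hy', h⟩]
  have h₁ : (a * f x * b * g t * d).1 ≠ (a * f x' * b * g t * d).1 := by simpa using hxx'₁
  have h₂ : (a * f x' * b * g t * d).2 = (a * f x * b * g t * d).2 := by simp [hxx'₂]
  rcases h₁.ne_or_ne 1 with h | h
  exacts [⟨x, hx, t, ht, h, ht₂⟩, ⟨x', hx', t, ht, h, h₂ ▸ ht₂⟩]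

theorem exists_isPathAlong_fst_ne_one_and_snd_ne_one {V Γ₁ Γ₂ : Type} [Group Γ₁] [Group Γ₂]
    [DecidableEq V] {G : SimpleGraph V} {γ : V → V → Γ₁ × Γ₂} (hγ : IsLab G γ)
    {a₁ a₂ q₁ q₁' q₂ q₂' : V} {c₁ : G.Walk a₁ a₁} {c₂ : G.Walk a₂ a₂} (hc₁ : c₁.IsCycle)
    (hc₂ : c₂.IsCycle) (hq₁ : q₁ ∈ c₁.support) (hq₁' : q₁' ∈ c₁.support)
    (hq₂ : q₂ ∈ c₂.support) (hq₂' : q₂' ∈ c₂.support) (hq₁q₁' : q₁ ≠ q₁') (hq₂q₂' : q₂ ≠ q₂')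
    (hc₁Γ₁ : walkVal (fun p q => (γ p q).1) c₁ ≠ 1)
    (hc₁Γ₂ : walkVal (fun p q => (γ p q).2) c₁ = 1)
    (hc₂Γ₂ : walkVal (fun p q => (γ p q).2) c₂ ≠ 1) (a b d : Γ₁ × Γ₂) :
    ∃ R₁ : G.Walk q₁ q₁', R₁.IsPathAlong c₁ ∧ ∃ R₂ : G.Walk q₂ q₂', R₂.IsPathAlong c₂ ∧
      (a * walkVal γ R₁ * b * walkVal γ R₂ * d).1 ≠ 1 ∧
      (a * walkVal γ R₁ * b * walkVal γ R₂ * d).2 ≠ 1 := by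
  have fst_eq := map_walkVal_coarc_eq_iff hγ hq₁ hq₁' (MonoidHom.fst Γ₁ Γ₂)
  have snd_eq := map_walkVal_coarc_eq_iff hγ hq₁ hq₁' (MonoidHom.snd Γ₁ Γ₂)
  have snd_eq₂ := map_walkVal_coarc_eq_iff hγ hq₂ hq₂' (MonoidHom.snd Γ₁ Γ₂)
  simp only [MonoidHom.coe_fst, MonoidHom.coe_snd] at fst_eq snd_eq snd_eq₂
  rw [walkVal_fst] at hc₁Γ₁
  rw [walkVal_snd] at hc₁Γ₂ hc₂Γ₂
  exact exists_fst_ne_one_and_snd_ne_one (walkVal γ) (walkVal γ) a b d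
    (hc₁.isPathAlong_arc hq₁ hq₁') (hc₁.isPathAlong_coarc hq₁ hq₁' hq₁q₁')
    (hc₂.isPathAlong_arc hq₂ hq₂') (hc₂.isPathAlong_coarc hq₂ hq₂' hq₂q₂')
    (fun h => hc₁Γ₁ (fst_eq.1 h.symm)) (snd_eq.2 hc₁Γ₂).symm (fun h => hc₂Γ₂ (snd_eq₂.1 h.symm))

/-- The cycle `C` of the paper is `Q₁ Q₂ Q₃ Q₄`, so that `p₁, p₁', p₂, p₂'` occur in this cyclic
order; the subpaths `I₁` and `I₂` are `Q₄` and `Q₂`. -/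
theorem nonzero_brick_general
    {V Γ₁ Γ₂ : Type} [Group Γ₁] [Group Γ₂] (G : SimpleGraph V)
    (γ : V → V → Γ₁ × Γ₂) (hγ : IsLab G γ)
    {p₁ p₁' p₂ p₂' a₁ a₂ q₁ q₁' q₂ q₂' : V}
    (Q₁ : G.Walk p₁ p₁') (Q₂ : G.Walk p₁' p₂) (Q₃ : G.Walk p₂ p₂') (Q₄ : G.Walk p₂' p₁)
    (C₁ : G.Walk a₁ a₁) (C₂ : G.Walk a₂ a₂)
    (P₁ : G.Walk p₁ q₁) (P₁' : G.Walk p₁' q₁') (P₂ : G.Walk p₂ q₂) (P₂' : G.Walk p₂' q₂')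
    -- `C` is a cycle composed of the four segments, each of positive length:
    (hC : (Q₁.append (Q₂.append (Q₃.append Q₄))).IsCycle)
    (hQ₁ : 1 ≤ Q₁.length) (hQ₃ : 1 ≤ Q₃.length)
    (hC₁ : C₁.IsCycle) (hC₂ : C₂.IsCycle)
    -- the three cycles are pairwise vertex-disjoint:
    (hCC₁ : ∀ v : V, v ∈ (Q₁.append (Q₂.append (Q₃.append Q₄))).support → v ∉ C₁.support)
    (hCC₂ : ∀ v : V, v ∈ (Q₁.append (Q₂.append (Q₃.append Q₄))).support → v ∉ C₂.support)
    (hC₁C₂ : ∀ v : V, v ∈ C₁.support → v ∉ C₂.support)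
    -- the four connecting paths, with the prescribed ends:
    (hP₁ : P₁.IsPath) (hP₁' : P₁'.IsPath) (hP₂ : P₂.IsPath) (hP₂' : P₂'.IsPath)
    (hq₁ : q₁ ∈ C₁.support) (hq₁' : q₁' ∈ C₁.support)
    (hq₂ : q₂ ∈ C₂.support) (hq₂' : q₂' ∈ C₂.support)
    -- internal vertices of the connecting paths avoid all three cycles:
    (hi₁ : ∀ z ∈ P₁.support, z ≠ p₁ → z ≠ q₁ →
      z ∉ (Q₁.append (Q₂.append (Q₃.append Q₄))).support ∧ z ∉ C₁.support ∧ z ∉ C₂.support)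
    (hi₁' : ∀ z ∈ P₁'.support, z ≠ p₁' → z ≠ q₁' →
      z ∉ (Q₁.append (Q₂.append (Q₃.append Q₄))).support ∧ z ∉ C₁.support ∧ z ∉ C₂.support)
    (hi₂ : ∀ z ∈ P₂.support, z ≠ p₂ → z ≠ q₂ →
      z ∉ (Q₁.append (Q₂.append (Q₃.append Q₄))).support ∧ z ∉ C₁.support ∧ z ∉ C₂.support)
    (hi₂' : ∀ z ∈ P₂'.support, z ≠ p₂' → z ≠ q₂' →
      z ∉ (Q₁.append (Q₂.append (Q₃.append Q₄))).support ∧ z ∉ C₁.support ∧ z ∉ C₂.support)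
    -- the connecting paths avoid the opposite cycle entirely:
    (hv₁ : ∀ z ∈ P₁.support, z ∉ C₂.support) (hv₁' : ∀ z ∈ P₁'.support, z ∉ C₂.support)
    (hv₂ : ∀ z ∈ P₂.support, z ∉ C₁.support) (hv₂' : ∀ z ∈ P₂'.support, z ∉ C₁.support)
    -- the connecting paths are pairwise vertex-disjoint:
    (hd₁ : ∀ v : V, v ∈ P₁.support → v ∉ P₁'.support)
    (hd₂ : ∀ v : V, v ∈ P₁.support → v ∉ P₂.support)
    (hd₃ : ∀ v : V, v ∈ P₁.support → v ∉ P₂'.support)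
    (hd₄ : ∀ v : V, v ∈ P₁'.support → v ∉ P₂.support)
    (hd₅ : ∀ v : V, v ∈ P₁'.support → v ∉ P₂'.support)
    (hd₆ : ∀ v : V, v ∈ P₂.support → v ∉ P₂'.support)
    -- group-value hypotheses:
    (hC₁Γ₁ : walkVal (fun p q => (γ p q).1) C₁ ≠ 1)
    (hC₁Γ₂ : walkVal (fun p q => (γ p q).2) C₁ = 1)
    (hC₂Γ₂ : walkVal (fun p q => (γ p q).2) C₂ ≠ 1) :
    ∃ (w : V) (D : G.Walk w w), D.IsCycle ∧ DNZ γ D ∧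
      (∀ e ∈ D.edges,
        e ∈ Q₁.edges ∨ e ∈ Q₂.edges ∨ e ∈ Q₃.edges ∨ e ∈ Q₄.edges ∨
        e ∈ C₁.edges ∨ e ∈ C₂.edges ∨
        e ∈ P₁.edges ∨ e ∈ P₁'.edges ∨ e ∈ P₂.edges ∨ e ∈ P₂'.edges) ∧
      (∀ e ∈ Q₄.edges, e ∈ D.edges) ∧ (∀ e ∈ Q₂.edges, e ∈ D.edges) := by
  classical
  set C := Q₁.append (Q₂.append (Q₃.append Q₄))
  set A : Set V := {z | z ∈ C.support}
  obtain ⟨hQ₂, hQ₄, hQ⟩ := hC.isPath_isPath_disjoint_of_append₄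
    (Walk.not_nil_iff_lt_length.2 hQ₁) (Walk.not_nil_iff_lt_length.2 hQ₃)
  have hQ₂A : ∀ z ∈ Q₂.support, z ∈ A := fun z hz => by simp [A, C, hz]
  have hQ₄A : ∀ z ∈ Q₄.support, z ∈ A := fun z hz => by simp [A, C, hz]
  have hAB₁ : Disjoint A {z | z ∈ C₁.support} := Set.disjoint_left.2 hCC₁
  have hAB₂ : Disjoint A {z | z ∈ C₂.support} := Set.disjoint_left.2 hCC₂
  have hB₁ : P₁.IsPathBetween A {z | z ∈ C₁.support} :=
    ⟨hP₁, hQ₄A _ Q₄.end_mem_support, hq₁, fun z hz h h' => (hi₁ z hz h h').imp_right And.left⟩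
  have hB₁' : P₁'.IsPathBetween A {z | z ∈ C₁.support} :=
    ⟨hP₁', hQ₂A _ Q₂.start_mem_support, hq₁', fun z hz h h' => (hi₁' z hz h h').imp_right And.left⟩
  have hB₂ : P₂.IsPathBetween A {z | z ∈ C₂.support} :=
    ⟨hP₂, hQ₂A _ Q₂.end_mem_support, hq₂, fun z hz h h' => (hi₂ z hz h h').imp_right And.right⟩
  have hB₂' : P₂'.IsPathBetween A {z | z ∈ C₂.support} :=
    ⟨hP₂', hQ₄A _ Q₄.start_mem_support, hq₂', fun z hz h h' => (hi₂' z hz h h').imp_right And.right⟩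
  obtain ⟨R₁, hR₁, R₂, hR₂, hD⟩ := exists_isPathAlong_fst_ne_one_and_snd_ne_one hγ hC₁ hC₂
    hq₁ hq₁' hq₂ hq₂' (fun h => hd₁ _ P₁.end_mem_support (h ▸ P₁'.end_mem_support))
    (fun h => hd₆ _ P₂.end_mem_support (h ▸ P₂'.end_mem_support)) hC₁Γ₁ hC₁Γ₂ hC₂Γ₂
    (walkVal γ Q₄ * walkVal γ P₁) ((walkVal γ P₁')⁻¹ * walkVal γ Q₂ * walkVal γ P₂)
    (walkVal γ P₂')⁻¹
  refine ⟨p₂', (Q₄.append (P₁.append (R₁.append P₁'.reverse))).append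
      (Q₂.append (P₂.append (R₂.append P₂'.reverse))),
    Walk.isCycle_append_append hQ₄ hQ₂ hQ hQ₄A hQ₂A
      (hB₁.isPath_append_append_reverse hB₁' hAB₁ hd₁ hR₁.1 hR₁.2.1)
      (hB₂.isPath_append_append_reverse hB₂' hAB₂ hd₆ hR₂.1 hR₂.2.1) ?_
      (fun z hz => hB₁.eq_or_eq_of_mem_append_append_reverse hB₁' hAB₁ hR₁.2.1 hz)
      (fun z hz => hB₂.eq_or_eq_of_mem_append_append_reverse hB₂' hAB₂ hR₂.2.1 hz)
      (hB₁.one_lt_length_append_append_reverse hB₁' hAB₁), ?_, ?_, fun e he => by simp [he],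
    fun e he => by simp [he]⟩
  · intro z hz hz'
    simp only [Walk.mem_support_append_iff, Walk.support_reverse, List.mem_reverse] at hz hz'
    rcases hz with h | h | h <;> rcases hz' with h' | h' | h'
    exacts [hd₂ z h h', hv₁ z h (hR₂.2.1 h'), hd₃ z h h', hv₂ z h' (hR₁.2.1 h),
      hC₁C₂ z (hR₁.2.1 h) (hR₂.2.1 h'), hv₂' z h' (hR₁.2.1 h), hd₄ z h h',
      hv₁' z h (hR₂.2.1 h'), hd₅ z h h']
  · rw [dnz_iff]
    simpa only [walkVal_append, walkVal_reverse hγ, mul_assoc] using hD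
  · intro e he
    have h₁ := @hR₁.2.2 e
    have h₂ := @hR₂.2.2 e
    simp only [Walk.edges_append, Walk.edges_reverse, List.mem_append, List.mem_reverse] at he
    rcases he with (h | h | h | h) | h | h | h | h <;> simp only [h, h₁, h₂, true_or, or_true]

/-- Lemma 14 (non-zero brick).  The cycle `C` is presented as the concatenation of four
segments `Q₁ : p₁ → p₁'`, `Q₂ : p₁' → p₂`, `Q₃ : p₂ → p₂'`, `Q₄ : p₂' → p₁`, each with at
least one edge, so that `p₁, p₁', p₂, p₂'` occur in this cyclic order on `C`; the subpath
`I₁` of `C` with ends `p₁, p₂'` avoiding `p₂` is `Q₄`, and the subpath `I₂` with ends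
`p₁', p₂` avoiding `p₁` is `Q₂`.  Given pairwise disjoint cycles `C, C₁, C₂`, pairwise
disjoint connecting paths as below, with `C₁` being `Γ₁`-non-zero and `Γ₂`-zero and `C₂`
being `Γ₂`-non-zero, there is a `(Γ₁,Γ₂)`-non-zero cycle `D` inside the union that
contains `I₁ ∪ I₂`. -/
theorem nonzero_brick
    {V Γ₁ Γ₂ : Type} [Group Γ₁] [Group Γ₂] (G : SimpleGraph V)
    (γ : V → V → Γ₁ × Γ₂) (hγ : IsLab G γ)
    {p₁ p₁' p₂ p₂' a₁ a₂ q₁ q₁' q₂ q₂' : V}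
    (Q₁ : G.Walk p₁ p₁') (Q₂ : G.Walk p₁' p₂) (Q₃ : G.Walk p₂ p₂') (Q₄ : G.Walk p₂' p₁)
    (C₁ : G.Walk a₁ a₁) (C₂ : G.Walk a₂ a₂)
    (P₁ : G.Walk p₁ q₁) (P₁' : G.Walk p₁' q₁') (P₂ : G.Walk p₂ q₂) (P₂' : G.Walk p₂' q₂')
    -- `C` is a cycle composed of the four segments, each of positive length:
    (hC : (Q₁.append (Q₂.append (Q₃.append Q₄))).IsCycle)
    (hQ₁ : 1 ≤ Q₁.length) (hQ₂ : 1 ≤ Q₂.length) (hQ₃ : 1 ≤ Q₃.length) (hQ₄ : 1 ≤ Q₄.length)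
    (hC₁ : C₁.IsCycle) (hC₂ : C₂.IsCycle)
    -- the three cycles are pairwise vertex-disjoint:
    (hCC₁ : ∀ v : V, v ∈ (Q₁.append (Q₂.append (Q₃.append Q₄))).support → v ∉ C₁.support)
    (hCC₂ : ∀ v : V, v ∈ (Q₁.append (Q₂.append (Q₃.append Q₄))).support → v ∉ C₂.support)
    (hC₁C₂ : ∀ v : V, v ∈ C₁.support → v ∉ C₂.support)
    -- the four connecting paths, with the prescribed ends:
    (hP₁ : P₁.IsPath) (hP₁' : P₁'.IsPath) (hP₂ : P₂.IsPath) (hP₂' : P₂'.IsPath)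
    (hq₁ : q₁ ∈ C₁.support) (hq₁' : q₁' ∈ C₁.support)
    (hq₂ : q₂ ∈ C₂.support) (hq₂' : q₂' ∈ C₂.support)
    -- internal vertices of the connecting paths avoid all three cycles:
    (hi₁ : ∀ z ∈ P₁.support, z ≠ p₁ → z ≠ q₁ →
      z ∉ (Q₁.append (Q₂.append (Q₃.append Q₄))).support ∧ z ∉ C₁.support ∧ z ∉ C₂.support)
    (hi₁' : ∀ z ∈ P₁'.support, z ≠ p₁' → z ≠ q₁' →
      z ∉ (Q₁.append (Q₂.append (Q₃.append Q₄))).support ∧ z ∉ C₁.support ∧ z ∉ C₂.support)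
    (hi₂ : ∀ z ∈ P₂.support, z ≠ p₂ → z ≠ q₂ →
      z ∉ (Q₁.append (Q₂.append (Q₃.append Q₄))).support ∧ z ∉ C₁.support ∧ z ∉ C₂.support)
    (hi₂' : ∀ z ∈ P₂'.support, z ≠ p₂' → z ≠ q₂' →
      z ∉ (Q₁.append (Q₂.append (Q₃.append Q₄))).support ∧ z ∉ C₁.support ∧ z ∉ C₂.support)
    -- the connecting paths avoid the opposite cycle entirely:
    (hv₁ : ∀ z ∈ P₁.support, z ∉ C₂.support) (hv₁' : ∀ z ∈ P₁'.support, z ∉ C₂.support)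
    (hv₂ : ∀ z ∈ P₂.support, z ∉ C₁.support) (hv₂' : ∀ z ∈ P₂'.support, z ∉ C₁.support)
    -- the connecting paths are pairwise vertex-disjoint:
    (hd₁ : ∀ v : V, v ∈ P₁.support → v ∉ P₁'.support)
    (hd₂ : ∀ v : V, v ∈ P₁.support → v ∉ P₂.support)
    (hd₃ : ∀ v : V, v ∈ P₁.support → v ∉ P₂'.support)
    (hd₄ : ∀ v : V, v ∈ P₁'.support → v ∉ P₂.support)
    (hd₅ : ∀ v : V, v ∈ P₁'.support → v ∉ P₂'.support)
    (hd₆ : ∀ v : V, v ∈ P₂.support → v ∉ P₂'.support)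
    -- group-value hypotheses:
    (hC₁Γ₁ : walkVal (fun p q => (γ p q).1) C₁ ≠ 1)
    (hC₁Γ₂ : walkVal (fun p q => (γ p q).2) C₁ = 1)
    (hC₂Γ₂ : walkVal (fun p q => (γ p q).2) C₂ ≠ 1) :
    ∃ (w : V) (D : G.Walk w w), D.IsCycle ∧ DNZ γ D ∧
      (∀ e ∈ D.edges,
        e ∈ Q₁.edges ∨ e ∈ Q₂.edges ∨ e ∈ Q₃.edges ∨ e ∈ Q₄.edges ∨
        e ∈ C₁.edges ∨ e ∈ C₂.edges ∨
        e ∈ P₁.edges ∨ e ∈ P₁'.edges ∨ e ∈ P₂.edges ∨ e ∈ P₂'.edges) ∧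
      (∀ e ∈ Q₄.edges, e ∈ D.edges) ∧ (∀ e ∈ Q₂.edges, e ∈ D.edges) :=
  nonzero_brick_general G γ hγ Q₁ Q₂ Q₃ Q₄ C₁ C₂ P₁ P₁' P₂ P₂' hC hQ₁ hQ₃ hC₁ hC₂ hCC₁ hCC₂ hC₁C₂
    hP₁ hP₁' hP₂ hP₂' hq₁ hq₁' hq₂ hq₂' hi₁ hi₁' hi₂ hi₂' hv₁ hv₁' hv₂ hv₂' hd₁ hd₂ hd₃ hd₄ hd₅ hd₆
    hC₁Γ₁ hC₁Γ₂ hC₂Γ₂
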